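/- arXiv:2307.13976 — 3 statements merged into one kernel-verified Lean document; each statement's English description precedes it below -/
import Mathlib

section
/- Let G be a finite group and r a prime with O_r(G) = 1 and Φ(G) = 1. Then the intersection of all maximal subgroups of G with index coprime to r is trivial. -/
/-!
Let `D` be the intersection of the maximal subgroups of `r'`-index; it is characteristic in `G`.
For a Sylow `r`-subgroup `Q` of `D`, the Frattini argument gives `N_G(Q) D = G`, so
`[G : N_G(Q)] = [D : N_D(Q)]` is prime to `r`. A maximal subgroup containing `N_G(Q)` would
then have `r'`-index, hence contain `D` and with it `N_G(Q) D = G`; so `Q` is normal in `G`, and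
`O_r(G) = 1` forces `Q = 1`. Now `D` is an `r'`-group, so `D` also lies in every maximal subgroup
`M` of index divisible by `r`: otherwise `MD = G` and `[G : M] = [D : D ∩ M]` would divide `|D|`.
Hence `D ≤ Φ(G) = 1`.
-/

open Subgroup

namespace Subgroup

variable {G : Type*} [Group G]

theorem index_eq_relIndex_of_sup_eq_top {M D : Subgroup G} [D.Normal] [D.FiniteIndex]
    (h : M ⊔ D = ⊤) : M.index = M.relIndex D := by
  have hM : (M ⊓ D).relIndex M * M.index = (M ⊓ D).index := relIndex_mul_index inf_le_left
  have hD : (M ⊓ D).relIndex D * D.index = (M ⊓ D).index := relIndex_mul_index inf_le_right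
  have hMD : (M ⊓ D).relIndex M = D.index := by
    rw [inf_comm, inf_relIndex_right, ← relIndex_sup_right, h, relIndex_top_right]
  rw [inf_relIndex_right] at hD
  rw [hMD, ← hD, mul_comm] at hM
  exact Nat.eq_of_mul_eq_mul_right (Nat.pos_of_ne_zero FiniteIndex.index_ne_zero) hM

end Subgroup

theorem Sylow.not_dvd_index_normalizer_map_subtype {G : Type*} [Group G] [Finite G] {p : ℕ}
    [Fact p.Prime] {N : Subgroup G} [N.Normal] (Q : Sylow p N) :
    ¬ p ∣ (normalizer (Q.map N.subtype : Set G)).index := by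
  rw [index_eq_relIndex_of_sup_eq_top (Sylow.normalizer_sup_eq_top Q)]
  have hQ : (Q : Subgroup N) ≤ (normalizer (Q.map N.subtype : Set G)).subgroupOf N :=
    fun x hx => le_normalizer (mem_map_of_mem N.subtype hx)
  exact fun h => Q.not_dvd_index (h.trans (index_dvd_of_le hQ))

section IndexCoprimeFrattini

variable (r : ℕ) (G : Type*) [Group G]

def indexCoprimeFrattini : Subgroup G :=
  sInf {H : Subgroup G | IsCoatom H ∧ ¬ r ∣ H.index}

variable {r G}

theorem indexCoprimeFrattini_le {M : Subgroup G} (hM : IsCoatom M) (hrM : ¬ r ∣ M.index) :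
    indexCoprimeFrattini r G ≤ M :=
  sInf_le ⟨hM, hrM⟩

instance indexCoprimeFrattini_characteristic : (indexCoprimeFrattini r G).Characteristic := by
  refine characteristic_iff_le_comap.mpr fun ϕ x hx => ?_
  refine mem_sInf.mpr fun M ⟨hM, hrM⟩ => ?_
  have hcomap : IsCoatom (M.comap ϕ.toMonoidHom) ∧ ¬ r ∣ (M.comap ϕ.toMonoidHom).index :=
    ⟨(isCoatom_comap ϕ).mpr hM, by rwa [index_comap_of_surjective _ ϕ.surjective]⟩
  exact mem_sInf.mp hx _ hcomap

variable [Finite G]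

theorem indexCoprimeFrattini_le_frattini (hD : ¬ r ∣ Nat.card (indexCoprimeFrattini r G)) :
    indexCoprimeFrattini r G ≤ frattini G := by
  refine le_iInf₂ fun M hM => ?_
  by_cases hrM : r ∣ M.index
  · by_contra hDM
    have hsup : M ⊔ indexCoprimeFrattini r G = ⊤ := hM.2 _ (left_lt_sup.mpr hDM)
    rw [index_eq_relIndex_of_sup_eq_top hsup] at hrM
    exact hD (hrM.trans (relIndex_dvd_card _ _))
  · exact indexCoprimeFrattini_le hM hrM

variable [Fact r.Prime]

theorem normal_map_sylow_indexCoprimeFrattini (Q : Sylow r (indexCoprimeFrattini r G)) :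
    (Q.map (indexCoprimeFrattini r G).subtype).Normal := by
  refine normalizer_eq_top_iff.mp ?_
  by_contra hne
  obtain ⟨M, hM, hNM⟩ := (eq_top_or_exists_le_coatom _).resolve_left hne
  have hDM : indexCoprimeFrattini r G ≤ M := indexCoprimeFrattini_le hM fun h =>
    Q.not_dvd_index_normalizer_map_subtype (h.trans (index_dvd_of_le hNM))
  exact hM.1 (top_le_iff.mp (Sylow.normalizer_sup_eq_top Q ▸ sup_le hNM hDM))

theorem not_dvd_card_indexCoprimeFrattini
    (hO : ∀ P : Subgroup G, P.Normal → IsPGroup r P → P = ⊥) :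
    ¬ r ∣ Nat.card (indexCoprimeFrattini r G) := by
  obtain ⟨Q⟩ : Nonempty (Sylow r (indexCoprimeFrattini r G)) := Sylow.nonempty
  have hK : Q.map (indexCoprimeFrattini r G).subtype = ⊥ :=
    hO _ (normal_map_sylow_indexCoprimeFrattini Q) (Q.2.map _)
  have hQ : (Q : Subgroup (indexCoprimeFrattini r G)) = ⊥ :=
    (map_eq_bot_iff_of_injective _ (subtype_injective _)).mp hK
  simpa [hQ, index_bot] using Q.not_dvd_index

end IndexCoprimeFrattini

theorem stmt_9_general {G : Type*} [Group G] [Finite G] (r : ℕ) (hr : r.Prime)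
    (hO : ∀ P : Subgroup G, P.Normal → IsPGroup r ↥P → P = ⊥)
    (hF : frattini G = ⊥) :
    sInf {H : Subgroup G | IsCoatom H ∧ ¬ r ∣ H.index} = ⊥ := by
  have : Fact r.Prime := ⟨hr⟩
  have hD : indexCoprimeFrattini r G ≤ frattini G :=
    indexCoprimeFrattini_le_frattini (not_dvd_card_indexCoprimeFrattini hO)
  exact le_bot_iff.mp (hF ▸ hD)

/-- Theorem 3.7 (special case): let `G` be a finite group and `r` a prime divisor of `|G|`
with `O_r(G) = 1` (every normal `r`-subgroup is trivial) and `Φ(G) = 1`. Then the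
intersection of all maximal subgroups of `G` of `r'`-index is trivial. -/
theorem stmt_9 {G : Type*} [Group G] [Finite G] (r : ℕ) (hr : r.Prime)
    (hdvd : r ∣ Nat.card G)
    (hO : ∀ P : Subgroup G, P.Normal → IsPGroup r ↥P → P = ⊥)
    (hF : frattini G = ⊥) :
    sInf {H : Subgroup G | IsCoatom H ∧ ¬ r ∣ H.index} = ⊥ :=
  stmt_9_general r hr hO hF
end

section
/- Let G be an almost simple group with socle T and let R be a Sylow r-subgroup of G with R ∩ T ≠ 1. Then R is contained in a unique maximal subgroup of G if and only if G has a unique conjugacy class of maximal subgroups whose index is coprime to r. -/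
/-!
A maximal subgroup has `r'`-index exactly when it contains a conjugate of `R`. So if `H` is the
only maximal subgroup containing `R`, every maximal subgroup of `r'`-index is conjugate to `H`.
Conversely, `R` is not normal: otherwise `R ⊓ T`, being normal in the simple group `T`, would be
all of `T`, and the nonabelian simple group `T` would be an `r`-group. Hence `N_G(R)` lies in a
maximal subgroup `M`. If `R ≤ H` with `H` maximal and `H ^ g = M`, then `R` and `R ^ g` are Sylow
subgroups of `M`, so by the Frattini argument `g ∈ M N_G(R) = M`, and `H = M`.
-/

open Pointwise Subgroup

section

variable {G : Type*} [Group G]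

theorem Subgroup.isCoatom_smul_iff (a : MulAut G) {H : Subgroup G} :
    IsCoatom (a • H) ↔ IsCoatom H :=
  OrderIso.isCoatom_iff (MulEquiv.mapSubgroup a) H

theorem Subgroup.le_of_normal_of_inf_ne_bot {N T : Subgroup G} [N.Normal]
    (hT : IsSimpleGroup T) (hNT : N ⊓ T ≠ ⊥) : T ≤ N := by
  rcases hT.eq_bot_or_eq_top_of_normal (N.subgroupOf T) inferInstance with h | h
  · rw [subgroupOf_eq_bot, disjoint_iff] at h
    exact absurd h hNT
  · exact subgroupOf_eq_top.mp h

theorem IsPGroup.mul_comm_of_isSimpleGroup {p : ℕ} [Fact p.Prime] {T : Type*} [Group T]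
    [Finite T] [IsSimpleGroup T] (hT : IsPGroup p T) (a b : T) : a * b = b * a := by
  have := hT.isNilpotent
  exact IsSimpleGroup.comm_iff_isSolvable.mpr inferInstance a b

namespace Sylow

variable {p : ℕ} [Fact p.Prime] [Finite G] (P : Sylow p G)

theorem normalizer_ne_top_of_inf_ne_bot {T : Subgroup G} [T.Normal] (hT : IsSimpleGroup T)
    (hnonab : ∃ a b : T, a * b ≠ b * a) (hPT : (P : Subgroup G) ⊓ T ≠ ⊥) :
    normalizer (P : Set G) ≠ ⊤ := by
  intro htop
  have : (P : Subgroup G).Normal := normalizer_eq_top_iff.mp htop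
  obtain ⟨a, b, hab⟩ := hnonab
  exact hab ((P.2.to_le (le_of_normal_of_inf_ne_bot hT hPT)).mul_comm_of_isSimpleGroup a b)

theorem not_dvd_index_of_le {H : Subgroup G} (hPH : (P : Subgroup G) ≤ H) : ¬ p ∣ H.index :=
  fun h ↦ P.not_dvd_index (h.trans (index_dvd_of_le hPH))

theorem exists_le_conj_smul_of_not_dvd_index {H : Subgroup G} (hH : ¬ p ∣ H.index) :
    ∃ g : G, (P : Subgroup G) ≤ MulAut.conj g • H := by
  let Q₀ : Sylow p H := Sylow.nonempty.some
  have hQ : ¬ p ∣ (Q₀.map H.subtype).index := by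
    rw [index_map_subtype]
    exact Nat.Prime.not_dvd_mul Fact.out Q₀.not_dvd_index hH
  obtain ⟨g, hg⟩ := MulAction.exists_smul_eq G ((Q₀.2.map H.subtype).toSylow hQ) P
  refine ⟨g, hg ▸ ?_⟩
  exact pointwise_smul_le_pointwise_smul_iff.mpr (map_subtype_le _)

theorem mem_of_smul_le {M : Subgroup G} (hNM : normalizer (P : Set G) ≤ M) {g : G}
    (hg : ((g • P : Sylow p G) : Subgroup G) ≤ M) : g ∈ M := by
  have hPM : (P : Subgroup G) ≤ M := le_normalizer.trans hNM
  obtain ⟨m, hm⟩ := MulAction.exists_smul_eq M ((g • P).subtype hg) (P.subtype hPM)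
  rw [smul_subtype] at hm
  have hmg : (m : G) * g ∈ normalizer (P : Set G) := by
    rw [← smul_eq_iff_mem_normalizer, mul_smul]
    exact subtype_injective hm
  simpa using M.mul_mem (M.inv_mem m.2) (hNM hmg)

theorem existsUnique_isCoatom_le_iff (hP : normalizer (P : Set G) ≠ ⊤) :
    (∃! H : Subgroup G, IsCoatom H ∧ (P : Subgroup G) ≤ H) ↔
      ((∃ H : Subgroup G, IsCoatom H ∧ ¬ p ∣ H.index) ∧
        ∀ H₁ H₂ : Subgroup G, IsCoatom H₁ → ¬ p ∣ H₁.index →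
          IsCoatom H₂ → ¬ p ∣ H₂.index →
          ∃ g : G, H₁.map (MulAut.conj g).toMonoidHom = H₂) := by
  constructor
  · rintro ⟨H, ⟨hH, hPH⟩, huniq⟩
    have hconj (K : Subgroup G) (hK : IsCoatom K) (hKi : ¬ p ∣ K.index) :
        ∃ g : G, MulAut.conj g • K = H := by
      obtain ⟨g, hg⟩ := P.exists_le_conj_smul_of_not_dvd_index hKi
      exact ⟨g, huniq _ ⟨(isCoatom_smul_iff _).mpr hK, hg⟩⟩
    refine ⟨⟨H, hH, P.not_dvd_index_of_le hPH⟩, fun H₁ H₂ h₁ h₁i h₂ h₂i ↦ ?_⟩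
    obtain ⟨g₁, e₁⟩ := hconj H₁ h₁ h₁i
    obtain ⟨g₂, e₂⟩ := hconj H₂ h₂ h₂i
    refine ⟨g₂⁻¹ * g₁, ?_⟩
    change MulAut.conj (g₂⁻¹ * g₁) • H₁ = H₂
    rw [map_mul, mul_smul, e₁, map_inv, ← e₂, inv_smul_smul]
  · rintro ⟨-, hconj⟩
    obtain ⟨M, hM, hNM⟩ := (eq_top_or_exists_le_coatom (normalizer (P : Set G))).resolve_left hP
    have hPM : (P : Subgroup G) ≤ M := le_normalizer.trans hNM
    refine ⟨M, ⟨hM, hPM⟩, fun H ⟨hH, hPH⟩ ↦ ?_⟩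
    obtain ⟨g, hg⟩ := hconj H M hH (P.not_dvd_index_of_le hPH) hM (P.not_dvd_index_of_le hPM)
    change MulAut.conj g • H = M at hg
    have hgM : g ∈ M := P.mem_of_smul_le hNM (hg ▸ pointwise_smul_le_pointwise_smul_iff.mpr hPH)
    exact smul_left_cancel _ (hg.trans (conj_smul_eq_self_of_mem hgM).symm)

end Sylow

end

theorem stmt_14_general {G : Type*} [Group G] [Finite G] (T : Subgroup G) [T.Normal]
    (hsimple : IsSimpleGroup ↥T) (hnonab : ∃ a b : ↥T, a * b ≠ b * a)
    {r : ℕ} (hr : r.Prime) (R : Sylow r G)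
    (hRT : (R : Subgroup G) ⊓ T ≠ ⊥) :
    (∃! H : Subgroup G, IsCoatom H ∧ (R : Subgroup G) ≤ H) ↔
      ((∃ H : Subgroup G, IsCoatom H ∧ ¬ r ∣ H.index) ∧
        ∀ H₁ H₂ : Subgroup G, IsCoatom H₁ → ¬ r ∣ H₁.index →
          IsCoatom H₂ → ¬ r ∣ H₂.index →
          ∃ g : G, H₁.map (MulAut.conj g).toMonoidHom = H₂) := by
  have : Fact r.Prime := ⟨hr⟩
  exact R.existsUnique_isCoatom_le_iff (R.normalizer_ne_top_of_inf_ne_bot hsimple hnonab hRT)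

/-- Corollary 2.4: let `G` be an almost simple group with socle `T` and let `R` be a Sylow
`r`-subgroup of `G` with `R ⊓ T ≠ 1`. Then `R` is contained in a unique maximal subgroup of
`G` if and only if `G` has a unique conjugacy class of maximal subgroups of `r'`-index. -/
theorem stmt_14 {G : Type*} [Group G] [Finite G] (T : Subgroup G) [T.Normal]
    (hsimple : IsSimpleGroup ↥T) (hnonab : ∃ a b : ↥T, a * b ≠ b * a)
    (hcent : Subgroup.centralizer (T : Set G) = ⊥)
    {r : ℕ} (hr : r.Prime) (R : Sylow r G)
    (hRT : (R : Subgroup G) ⊓ T ≠ ⊥) :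
    (∃! H : Subgroup G, IsCoatom H ∧ (R : Subgroup G) ≤ H) ↔
      ((∃ H : Subgroup G, IsCoatom H ∧ ¬ r ∣ H.index) ∧
        ∀ H₁ H₂ : Subgroup G, IsCoatom H₁ → ¬ r ∣ H₁.index →
          IsCoatom H₂ → ¬ r ∣ H₂.index →
          ∃ g : G, H₁.map (MulAut.conj g).toMonoidHom = H₂) :=
  stmt_14_general T hsimple hnonab hr R hRT
end

section
/- Let G be a finite group with a nontrivial normal subgroup E that is a direct product of nonabelian simple groups, let R be a non-normal Sylow r-subgroup of G, and suppose R is contained in a unique maximal subgroup of G and E ∩ R ≠ 1. Then G = ER. -/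
/-!
Put `K = E ∩ R`. Since `E` is normal, `K` is a Sylow `r`-subgroup of `E`, so the Frattini argument
gives `G = N_G(K) E`, and `R ≤ N_G(K)`. The subgroup `K` is not normal in `G`: a normal
`r`-subgroup of `E = L₁ × ⋯ × Lₜ` meets each nonabelian simple `Lᵢ` trivially (otherwise `Lᵢ`
would be an `r`-group, which has a nontrivial centre), hence centralises every `Lᵢ`, and so lies in
`Z(E) = 1`. Now if `ER ≠ G`, the proper subgroups `N_G(K)` and `ER` both contain `R`, so both lie
in the unique maximal subgroup `M` above `R`; then `G = N_G(K) E ≤ M`, which is absurd.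
-/

open Subgroup

theorem sup_ne_top_of_existsUnique_isCoatom {α : Type*} [Lattice α] [OrderTop α] [IsCoatomic α]
    {a b c : α} (h : ∃! m, IsCoatom m ∧ a ≤ m) (hab : a ≤ b) (hac : a ≤ c) (hb : b ≠ ⊤)
    (hc : c ≠ ⊤) : b ⊔ c ≠ ⊤ := by
  obtain ⟨m, hm, hbm⟩ := (eq_top_or_exists_le_coatom b).resolve_left hb
  obtain ⟨m', hm', hcm'⟩ := (eq_top_or_exists_le_coatom c).resolve_left hc
  obtain rfl : m = m' := h.unique ⟨hm, hab.trans hbm⟩ ⟨hm', hac.trans hcm'⟩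
  exact ne_top_of_le_ne_top hm.1 (sup_le hbm hcm')

theorem IsSimpleGroup.center_eq_bot {H : Type*} [Group H] [IsSimpleGroup H]
    (h : ∃ a b : H, a * b ≠ b * a) : center H = ⊥ := by
  refine (center H).normal_of_characteristic.eq_bot_or_eq_top.resolve_right fun htop => ?_
  obtain ⟨a, b, hab⟩ := h
  exact hab (mem_center_iff.mp (htop ▸ mem_top b) a)

namespace Subgroup

variable {G : Type*} [Group G]

/-- The proof shows `H.relIndex K * (H ⊔ K).index = H.index`, i.e. `|K : H ∩ K| = |HK : H|`. -/
theorem relIndex_dvd_index_of_normal_right (H K : Subgroup G) [K.Normal] [K.FiniteIndex] :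
    H.relIndex K ∣ H.index := by
  have hH : H.relIndex K * K.index = K.relIndex H * H.index := by
    have h₁ := relIndex_inf_mul_relIndex H K ⊤
    have h₂ := relIndex_inf_mul_relIndex K H ⊤
    simp only [inf_top_eq, relIndex_top_right] at h₁ h₂
    rw [h₁, h₂, inf_comm]
  have hK : K.index = K.relIndex H * (H ⊔ K).index := by
    rw [← relIndex_sup_right, ← relIndex_top_right, ← relIndex_top_right (H ⊔ K),
      relIndex_mul_relIndex _ _ _ le_sup_right le_top]
  have hKH : K.relIndex H ≠ 0 :=
    ne_zero_of_dvd_ne_zero index_ne_zero_of_finite (relIndex_dvd_index_of_normal K H)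
  refine Dvd.intro (H ⊔ K).index (mul_left_cancel₀ hKH ?_)
  rw [← hH, hK]
  ring

theorem iSup_le_normalizer {ι : Type*} {L : ι → Subgroup G}
    (hcomm : Pairwise fun i j => ∀ x ∈ L i, ∀ y ∈ L j, Commute x y) (i : ι) :
    (⨆ j, L j) ≤ normalizer (L i : Set G) := by
  refine iSup_le fun j => ?_
  rcases eq_or_ne j i with rfl | hji
  · exact le_normalizer
  · refine le_trans (fun x hx => ?_) (centralizer_le_normalizer _)
    exact mem_centralizer_iff.mpr fun y hy => (hcomm hji x hx y hy).symm

theorem iSup_inf_centralizer_eq_bot {ι : Type*} [Fintype ι] {L : ι → Subgroup G}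
    (hindep : iSupIndep L) (hcomm : Pairwise fun i j => ∀ x ∈ L i, ∀ y ∈ L j, Commute x y)
    (hcenter : ∀ i, center (L i) = ⊥) :
    (⨆ i, L i) ⊓ centralizer (⨆ i, L i : Subgroup G) = ⊥ := by
  classical
  set ψ := MonoidHom.noncommPiCoprod (fun i => (L i).subtype)
    (fun i j hij x y => hcomm hij x x.2 y y.2)
  have hrange : ψ.range = ⨆ i, L i :=
    (MonoidHom.noncommPiCoprod_range _).trans (by simp only [range_subtype])
  have hinj : Function.Injective ψ :=
    MonoidHom.injective_noncommPiCoprod_of_iSupIndep _ (by simpa using hindep)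
      fun i => Subtype.coe_injective
  refine eq_bot_iff.mpr fun x ⟨hxL, hxc⟩ => ?_
  obtain ⟨f, rfl⟩ := hrange ▸ hxL
  suffices f = 1 by simp [this]
  funext i
  have hfi : f i ∈ center (L i) := mem_center_iff.mpr fun y => by
    have hy : ψ (Pi.mulSingle i y) = y := MonoidHom.noncommPiCoprod_mulSingle _ _ _
    have hcomm_y := mem_centralizer_iff.mp hxc y (mem_iSup_of_mem i y.2)
    rw [← hy, ← map_mul, ← map_mul] at hcomm_y
    simpa using congrFun (hinj hcomm_y) i
  rwa [hcenter i] at hfi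

variable [Finite G] {p : ℕ} [Fact p.Prime]

theorem disjoint_of_isPGroup_of_center_eq_bot {K L : Subgroup G} [K.Normal] (hK : IsPGroup p K)
    [IsSimpleGroup L] (hL : center L = ⊥) : Disjoint K L := by
  refine subgroupOf_eq_bot.mp <|
    (normal_subgroupOf (H := L) (N := K)).eq_bot_or_eq_top.resolve_right fun htop => ?_
  have hcenter : Nontrivial (center L) :=
    (hK.to_le (subgroupOf_eq_top.mp htop)).center_nontrivial
  rw [hL] at hcenter
  exact not_nontrivial _ hcenter

theorem eq_bot_of_isPGroup_of_le_iSup {ι : Type*} [Fintype ι] {L : ι → Subgroup G}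
    (hindep : iSupIndep L) (hcomm : Pairwise fun i j => ∀ x ∈ L i, ∀ y ∈ L j, Commute x y)
    [∀ i, IsSimpleGroup (L i)] (hcenter : ∀ i, center (L i) = ⊥) {K : Subgroup G} [K.Normal]
    (hK : IsPGroup p K) (hKL : K ≤ ⨆ i, L i) : K = ⊥ := by
  have hKc : K ≤ centralizer (⨆ i, L i : Subgroup G) := by
    refine le_centralizer_iff.mpr (iSup_le fun i => le_centralizer_iff.mpr ?_)
    rw [← commutator_eq_bot_iff_le_centralizer, eq_bot_iff]
    have hKnorm : K ≤ normalizer (L i : Set G) := hKL.trans (iSup_le_normalizer hcomm i)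
    calc ⁅K, L i⁆ ≤ K ⊓ L i :=
          le_inf (commutator_le_left K (L i)) (le_normalizer_iff_commutator_le_right.mp hKnorm)
      _ = ⊥ := disjoint_iff.mp (disjoint_of_isPGroup_of_center_eq_bot hK (hcenter i))
  exact eq_bot_iff.mpr
    ((le_inf hKL hKc).trans (iSup_inf_centralizer_eq_bot hindep hcomm hcenter).le)

end Subgroup

namespace Sylow

variable {G : Type*} [Group G] [Finite G] {p : ℕ} [Fact p.Prime]

noncomputable def subgroupOf (P : Sylow p G) (N : Subgroup G) [N.Normal] : Sylow p N :=
  (P.isPGroup'.comap_subtype (K := N)).toSylow fun h =>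
    P.not_dvd_index (h.trans ((P : Subgroup G).relIndex_dvd_index_of_normal_right N))

theorem coe_subgroupOf (P : Sylow p G) (N : Subgroup G) [N.Normal] :
    (P.subgroupOf N : Subgroup N) = (P : Subgroup G).subgroupOf N :=
  rfl

theorem normalizer_inf_sup_eq_top (P : Sylow p G) (N : Subgroup G) [N.Normal] :
    normalizer ((N ⊓ P : Subgroup G) : Set G) ⊔ N = ⊤ := by
  rw [← normalizer_sup_eq_top (P.subgroupOf N), coe_subgroupOf, subgroupOf_map_subtype, inf_comm]

end Sylow

theorem stmt_19_general {G : Type*} [Group G] [Finite G] {r : ℕ} (hr : r.Prime)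
    (R : Sylow r G)
    (hu : ∃! H : Subgroup G, IsCoatom H ∧ (R : Subgroup G) ≤ H)
    (E : Subgroup G) [E.Normal]
    (t : ℕ) (L : Fin t → Subgroup G)
    (hsup : (⨆ i, L i) = E)
    (hindep : ∀ i : Fin t, L i ⊓ (⨆ j : Fin t, ⨆ _ : j ≠ i, L j) = ⊥)
    (hcommute : ∀ i j : Fin t, i ≠ j → ∀ x ∈ L i, ∀ y ∈ L j, x * y = y * x)
    (hsimple : ∀ i, IsSimpleGroup ↥(L i))
    (hnonab : ∀ i, ∃ a b : ↥(L i), a * b ≠ b * a)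
    (hER : E ⊓ (R : Subgroup G) ≠ ⊥) :
    E ⊔ (R : Subgroup G) = ⊤ := by
  have : Fact r.Prime := ⟨hr⟩
  have hK_not_normal : ¬ (E ⊓ (R : Subgroup G)).Normal := fun _ =>
    hER <| eq_bot_of_isPGroup_of_le_iSup (fun i => disjoint_iff.mpr (hindep i))
      (fun i j hij => hcommute i j hij) (fun i => (hsimple i).center_eq_bot (hnonab i))
      (R.isPGroup'.to_le inf_le_right) (hsup ▸ inf_le_left)
  have hR_le : (R : Subgroup G) ≤ normalizer ((E ⊓ R : Subgroup G) : Set G) :=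
    (le_inf le_normalizer_of_normal le_normalizer).trans inf_normalizer_le_normalizer_inf
  by_contra hne
  refine sup_ne_top_of_existsUnique_isCoatom hu hR_le le_sup_right
    (mt normalizer_eq_top_iff.mp hK_not_normal) hne (top_unique ?_)
  calc ⊤ = normalizer ((E ⊓ R : Subgroup G) : Set G) ⊔ E := (R.normalizer_inf_sup_eq_top E).symm
    _ ≤ _ := sup_le_sup_left le_sup_left _

/-- From the proof of Lemma 3.10 / Theorem 3.11(iv): let `G` be a finite group with a
nontrivial normal subgroup `E` which is an internal direct product of nonabelian simple
subgroups, and let `R` be a non-normal Sylow `r`-subgroup of `G` contained in a unique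
maximal subgroup of `G`, with `E ⊓ R ≠ 1`. Then `G = ER`. -/
theorem stmt_19 {G : Type*} [Group G] [Finite G] {r : ℕ} (hr : r.Prime)
    (R : Sylow r G) (hRnn : ¬ (R : Subgroup G).Normal)
    (hu : ∃! H : Subgroup G, IsCoatom H ∧ (R : Subgroup G) ≤ H)
    (E : Subgroup G) [E.Normal] (hE : E ≠ ⊥)
    (t : ℕ) (L : Fin t → Subgroup G)
    (hsup : (⨆ i, L i) = E)
    (hindep : ∀ i : Fin t, L i ⊓ (⨆ j : Fin t, ⨆ _ : j ≠ i, L j) = ⊥)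
    (hcommute : ∀ i j : Fin t, i ≠ j → ∀ x ∈ L i, ∀ y ∈ L j, x * y = y * x)
    (hsimple : ∀ i, IsSimpleGroup ↥(L i))
    (hnonab : ∀ i, ∃ a b : ↥(L i), a * b ≠ b * a)
    (hER : E ⊓ (R : Subgroup G) ≠ ⊥) :
    E ⊔ (R : Subgroup G) = ⊤ :=
  stmt_19_general hr R hu E t L hsup hindep hcommute hsimple hnonab hER
end
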